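/- Let D = dℓ² be a positive discriminant that is not a perfect square, with d fundamental and ℓ > 0. Then L(1,ψ_D) = L(1,ψ_d) · (1/ℓ) · ∏_{p | ℓ} [1 + (p - ψ_d(p)) · ((ℓ, p^∞) - 1)/(p - 1)], where (ℓ, p^∞) = p^{ord_p(ℓ)}. -/

import Mathlib

/-- The Kronecker symbol at a prime `p`. -/
def kronP (d : ℤ) (p : ℕ) : ℤ :=
  if p = 2 then (if d % 2 = 0 then 0 else if d % 8 = 1 ∨ d % 8 = 7 then 1 else -1)
  else jacobiSym d p

/-- The Kronecker symbol `(d / n)` for `n ≥ 1`. -/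
def kron (d : ℤ) (n : ℕ) : ℤ :=
  ((n.primeFactorsList).map (kronP d)).prod

/-- `d` is a fundamental discriminant. -/
def IsFundamentalDiscriminant (d : ℤ) : Prop :=
  (d % 4 = 1 ∧ Squarefree d) ∨
  (d % 4 = 0 ∧ Squarefree (d / 4) ∧ (d / 4 % 4 = 2 ∨ d / 4 % 4 = 3))

/-!
Write `χ = ψ_d` and `h k = ∏_{p ∣ k} (1 - χ p)`. On prime powers
`(χ * h)(p^a) = χ(p)^a + (1 - χ(p)) (1 + ⋯ + χ(p)^(a-1)) = 1`, so `χ * h = ζ`, and complete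
multiplicativity of `χ` turns this into `χ(m / (m, ℓ)) = ∑_{k ∣ (m, ℓ)} h(k) χ(m / k)`.
Dividing by `m` and summing, the `N`-th partial sum of `L(1, ψ_D)` is
`∑_{k ∣ ℓ} h(k)/k · (⌊N/k⌋-th partial sum of L(1, χ))`, which tends to `L(1, χ) ∑_{k ∣ ℓ} h(k)/k`.
That divisor sum is `ℓ⁻¹ (id * h)(ℓ)`, an Euler product whose local factors are
`p^e + (1 - χ p)(1 + p + ⋯ + p^(e-1))`.
-/

open Finset
open scoped ArithmeticFunction.zeta

theorem Finset.sum_range_filter_dvd_succ {M : Type*} [AddCommMonoid M] (k N : ℕ) (F : ℕ → M) :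
    ∑ n ∈ range N with k ∣ n + 1, F ((n + 1) / k) = ∑ j ∈ range (N / k), F (j + 1) := by
  induction N with
  | zero => simp
  | succ N ih =>
    rw [range_add_one, filter_insert]
    by_cases h : k ∣ N + 1
    · rw [if_pos h, sum_insert (by simp), ih, Nat.succ_div_of_dvd h, sum_range_succ, add_comm]
    · rw [if_neg h, ih, Nat.succ_div_of_not_dvd h]

namespace ArithmeticFunction

variable {R : Type*}

def IsCompletelyMultiplicative [MonoidWithZero R] (f : ArithmeticFunction R) : Prop :=
  f 1 = 1 ∧ ∀ m n, f (m * n) = f m * f n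

namespace IsCompletelyMultiplicative

variable [MonoidWithZero R] {f : ArithmeticFunction R}

theorem isMultiplicative (hf : f.IsCompletelyMultiplicative) : f.IsMultiplicative :=
  ⟨hf.1, fun _ => hf.2 _ _⟩

theorem map_pow (hf : f.IsCompletelyMultiplicative) (n k : ℕ) : f (n ^ k) = f n ^ k := by
  induction k with
  | zero => simpa using hf.1
  | succ k ih => rw [pow_succ, hf.2, ih, pow_succ]

end IsCompletelyMultiplicative

theorem isCompletelyMultiplicative_natCast_id [Semiring R] :
    ((ArithmeticFunction.id : ArithmeticFunction ℕ) :
      ArithmeticFunction R).IsCompletelyMultiplicative :=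
  ⟨by simp, fun m n => by simp⟩

variable [CommRing R]

theorem mul_prodPrimeFactors_one_sub_apply_prime_pow {f : ArithmeticFunction R}
    (hf : f.IsCompletelyMultiplicative) (χ : ℕ → R) {p : ℕ} (hp : p.Prime) (a : ℕ) :
    (f * prodPrimeFactors (1 - χ ·)) (p ^ a) =
      f p ^ a + (1 - χ p) * ∑ j ∈ range a, f p ^ j := by
  have hfactor : ∀ j ∈ range (a + 1), f (p ^ j) * prodPrimeFactors (1 - χ ·) (p ^ a / p ^ j) =
      f p ^ j * if j = a then 1 else 1 - χ p := by
    intro j hj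
    have hja : j ≤ a := Nat.lt_succ_iff.mp (mem_range.mp hj)
    rw [Nat.pow_div hja hp.pos, hf.map_pow,
      prodPrimeFactors_apply (pow_ne_zero _ hp.ne_zero)]
    split_ifs with hj_eq
    · simp [hj_eq]
    · rw [Nat.primeFactors_prime_pow (by omega) hp, prod_singleton]
  rw [mul_apply, Nat.sum_divisorsAntidiagonal (f · * prodPrimeFactors (1 - χ ·) ·),
    Nat.divisors_prime_pow hp, sum_map]
  simp only [Function.Embedding.coeFn_mk]
  rw [sum_congr rfl hfactor, sum_range_succ, if_pos rfl, mul_one, add_comm, mul_sum]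
  congr 1
  refine sum_congr rfl fun j hj => ?_
  rw [if_neg (mem_range.mp hj).ne, mul_comm]

theorem IsCompletelyMultiplicative.mul_prodPrimeFactors_one_sub_self {χ : ArithmeticFunction R}
    (hχ : χ.IsCompletelyMultiplicative) :
    χ * prodPrimeFactors (1 - χ ·) = (ζ : ArithmeticFunction R) := by
  refine (hχ.isMultiplicative.mul (IsMultiplicative.prodPrimeFactors _)).eq_iff_eq_on_prime_powers
    _ _ isMultiplicative_zeta.natCast |>.mpr fun p a hp => ?_
  rw [mul_prodPrimeFactors_one_sub_apply_prime_pow hχ _ hp, mul_neg_geom_sum, natCoe_apply,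
    zeta_apply, if_neg (pow_ne_zero _ hp.ne_zero)]
  simp

theorem IsCompletelyMultiplicative.apply_div_eq_sum_divisors {χ : ArithmeticFunction R}
    (hχ : χ.IsCompletelyMultiplicative) {g m : ℕ} (hgm : g ∣ m) :
    χ (m / g) = ∑ k ∈ g.divisors, prodPrimeFactors (1 - χ ·) k * χ (m / k) := by
  rcases eq_or_ne g 0 with rfl | hg
  · simp [zero_dvd_iff.mp hgm]
  have hsplit : ∀ k ∈ g.divisors, prodPrimeFactors (1 - χ ·) k * χ (m / k) =
      χ (m / g) * (prodPrimeFactors (1 - χ ·) k * χ (g / k)) := by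
    intro k hk
    rw [← Nat.div_mul_div hgm (Nat.dvd_of_mem_divisors hk), hχ.2]
    ring
  have hconv : ∑ k ∈ g.divisors, prodPrimeFactors (1 - χ ·) k * χ (g / k) = 1 := by
    rw [← Nat.sum_divisorsAntidiagonal (prodPrimeFactors (1 - χ ·) · * χ ·), ← mul_apply,
      mul_comm, hχ.mul_prodPrimeFactors_one_sub_self, natCoe_apply, zeta_apply, if_neg hg,
      Nat.cast_one]
  rw [sum_congr rfl hsplit, ← mul_sum, hconv, mul_one]

theorem sum_divisors_prodPrimeFactors_one_sub_div {K : Type*} [Field K] [CharZero K]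
    (χ : ℕ → K) {ℓ : ℕ} (hℓ : ℓ ≠ 0) :
    ∑ k ∈ ℓ.divisors, prodPrimeFactors (1 - χ ·) k / k =
      (ℓ : K)⁻¹ * ∏ p ∈ ℓ.primeFactors,
        (1 + ((p : K) - χ p) * ((p : K) ^ ℓ.factorization p - 1) / ((p : K) - 1)) := by
  let ι : ArithmeticFunction K := (ArithmeticFunction.id : ArithmeticFunction ℕ)
  have hsum : ∑ k ∈ ℓ.divisors, prodPrimeFactors (1 - χ ·) k / k =
      (ℓ : K)⁻¹ * (ι * prodPrimeFactors (1 - χ ·)) ℓ := by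
    rw [mul_apply, Nat.sum_divisorsAntidiagonal' (ι · * prodPrimeFactors (1 - χ ·) ·), mul_sum]
    refine sum_congr rfl fun k hk => ?_
    have hk0 : (k : K) ≠ 0 := Nat.cast_ne_zero.mpr (Nat.pos_of_mem_divisors hk).ne'
    have hℓ0 : (ℓ : K) ≠ 0 := Nat.cast_ne_zero.mpr hℓ
    rw [natCoe_apply, id_apply, Nat.cast_div (Nat.dvd_of_mem_divisors hk) hk0]
    field_simp
  have hlocal : ∀ p ∈ ℓ.primeFactors,
      (ι * prodPrimeFactors (1 - χ ·)) (p ^ ℓ.factorization p) =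
        1 + ((p : K) - χ p) * ((p : K) ^ ℓ.factorization p - 1) / ((p : K) - 1) := by
    intro p hp
    have hprime := Nat.prime_of_mem_primeFactors hp
    have hp1 : (p : K) ≠ 1 := Nat.cast_ne_one.mpr hprime.ne_one
    have hp1' : (p : K) - 1 ≠ 0 := sub_ne_zero.mpr hp1
    rw [mul_prodPrimeFactors_one_sub_apply_prime_pow isCompletelyMultiplicative_natCast_id _
      hprime, natCoe_apply, id_apply, geom_sum_eq hp1]
    field_simp
    ring
  have hmult := isMultiplicative_id.natCast.mul (IsMultiplicative.prodPrimeFactors (1 - χ ·))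
  rw [hsum, hmult.multiplicative_factorization _ hℓ, Finsupp.prod, Nat.support_factorization,
    prod_congr rfl hlocal]

theorem IsCompletelyMultiplicative.sum_range_apply_div_gcd {K : Type*} [Field K] [CharZero K]
    {χ : ArithmeticFunction K} (hχ : χ.IsCompletelyMultiplicative) {ℓ : ℕ} (hℓ : ℓ ≠ 0)
    (N : ℕ) :
    ∑ n ∈ range N, χ ((n + 1) / Nat.gcd (n + 1) ℓ) / (n + 1) =
      ∑ k ∈ ℓ.divisors, prodPrimeFactors (1 - χ ·) k / k *
        ∑ j ∈ range (N / k), χ (j + 1) / (j + 1) := by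
  have hterm : ∀ n : ℕ, χ ((n + 1) / Nat.gcd (n + 1) ℓ) / (n + 1) =
      ∑ k ∈ ℓ.divisors, if k ∣ n + 1 then
        prodPrimeFactors (1 - χ ·) k / k * (χ ((n + 1) / k) / ((n + 1) / k : ℕ)) else 0 := by
    intro n
    have hfilter : {k ∈ ℓ.divisors | k ∣ n + 1} = (Nat.gcd (n + 1) ℓ).divisors := by
      ext k
      simp only [mem_filter, Nat.mem_divisors, Nat.dvd_gcd_iff]
      grind [Nat.gcd_ne_zero_right]
    rw [← sum_filter, hfilter, hχ.apply_div_eq_sum_divisors (Nat.gcd_dvd_left _ _), sum_div]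
    refine sum_congr rfl fun k hk => ?_
    have hk0 : (k : K) ≠ 0 := Nat.cast_ne_zero.mpr (Nat.pos_of_mem_divisors hk).ne'
    have hkn : k ∣ n + 1 := (Nat.dvd_of_mem_divisors hk).trans (Nat.gcd_dvd_left _ _)
    rw [Nat.cast_div hkn hk0]
    field_simp
    push_cast
    ring
  rw [sum_congr rfl fun n _ => hterm n, sum_comm]
  refine sum_congr rfl fun k _ => ?_
  rw [← sum_filter, ← mul_sum, Finset.sum_range_filter_dvd_succ k N (fun q => χ q / (q : K))]
  push_cast
  rfl

end ArithmeticFunction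

theorem kron_one (d : ℤ) : kron d 1 = 1 := by
  simp [kron]

theorem kron_mul (d : ℤ) {a b : ℕ} (ha : a ≠ 0) (hb : b ≠ 0) :
    kron d (a * b) = kron d a * kron d b := by
  rw [kron, ((Nat.perm_primeFactorsList_mul ha hb).map (kronP d)).prod_eq, List.map_append,
    List.prod_append, kron, kron]

/-- Unlike `kron d 0 = 1` (empty product), `kronChar d 0 = 0`, as an arithmetic function must. -/
noncomputable def kronChar (d : ℤ) : ArithmeticFunction ℝ :=
  ⟨fun n => if n = 0 then 0 else kron d n, if_pos rfl⟩

theorem kronChar_apply (d : ℤ) {n : ℕ} (hn : n ≠ 0) : kronChar d n = kron d n :=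
  if_neg hn

theorem isCompletelyMultiplicative_kronChar (d : ℤ) :
    (kronChar d).IsCompletelyMultiplicative := by
  refine ⟨by simp [kronChar_apply, kron_one], fun m n => ?_⟩
  rcases eq_or_ne m 0 with rfl | hm
  · simp [kronChar]
  rcases eq_or_ne n 0 with rfl | hn
  · simp [kronChar]
  rw [kronChar_apply d (mul_ne_zero hm hn), kronChar_apply d hm, kronChar_apply d hn,
    kron_mul d hm hn, Int.cast_mul]

theorem stmt1_general (d : ℤ) (ℓ : ℕ) (hℓ : 0 < ℓ) (L1d : ℝ)
    (hL : Filter.Tendsto (fun N => ∑ n ∈ Finset.range N, (kron d (n + 1) : ℝ) / (n + 1))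
      Filter.atTop (nhds L1d)) :
    Filter.Tendsto
      (fun N => ∑ n ∈ Finset.range N,
        (kron d ((n + 1) / Nat.gcd (n + 1) ℓ) : ℝ) / (n + 1))
      Filter.atTop
      (nhds (L1d * (1 / (ℓ : ℝ)) *
        ∏ p ∈ ℓ.primeFactors,
          (1 + ((p : ℝ) - (kron d p : ℝ)) *
            ((p : ℝ) ^ (ℓ.factorization p) - 1) / ((p : ℝ) - 1)))) := by
  set χ := kronChar d
  have hχ : ∀ n ≠ 0, χ n = kron d n := fun n hn => kronChar_apply d hn
  have hpartial : ∀ N,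
      ∑ n ∈ Finset.range N, (kron d ((n + 1) / Nat.gcd (n + 1) ℓ) : ℝ) / (n + 1) =
      ∑ k ∈ ℓ.divisors, ArithmeticFunction.prodPrimeFactors (1 - χ ·) k / k *
        ∑ j ∈ Finset.range (N / k), (kron d (j + 1) : ℝ) / (j + 1) := by
    intro N
    have hquot (n : ℕ) : (n + 1) / Nat.gcd (n + 1) ℓ ≠ 0 :=
      (Nat.div_pos (Nat.gcd_le_left _ n.succ_pos) (Nat.gcd_pos_of_pos_left _ n.succ_pos)).ne'
    simp only [← hχ _ (hquot _), ← hχ _ (Nat.succ_ne_zero _)]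
    exact (isCompletelyMultiplicative_kronChar d).sum_range_apply_div_gcd hℓ.ne' N
  have hconst : L1d * (1 / (ℓ : ℝ)) * ∏ p ∈ ℓ.primeFactors,
      (1 + ((p : ℝ) - (kron d p : ℝ)) *
        ((p : ℝ) ^ (ℓ.factorization p) - 1) / ((p : ℝ) - 1)) =
      ∑ k ∈ ℓ.divisors, ArithmeticFunction.prodPrimeFactors (1 - χ ·) k / k * L1d := by
    rw [← Finset.sum_mul, ArithmeticFunction.sum_divisors_prodPrimeFactors_one_sub_div _ hℓ.ne',
      one_div, mul_assoc, mul_comm]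
    congr 2
    refine Finset.prod_congr rfl fun p hp => ?_
    rw [hχ p (Nat.prime_of_mem_primeFactors hp).ne_zero]
  rw [funext hpartial, hconst]
  exact tendsto_finsetSum _ fun k hk =>
    (hL.comp (Nat.tendsto_div_const_atTop (Nat.pos_of_mem_divisors hk).ne')).const_mul _

/-- Let `D = d ℓ²` be a positive non-square discriminant (`d` fundamental, `ℓ > 0`).
If the partial sums of `∑ ψ_d(n)/n` converge to `L(1, ψ_d)`, then the partial sums of
`∑ ψ_D(n)/n` converge to
`L(1, ψ_d) · ℓ⁻¹ · ∏_{p ∣ ℓ} [1 + (p - ψ_d(p)) ((ℓ, p^∞) - 1)/(p - 1)]`. -/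
theorem stmt1 (D d : ℤ) (ℓ : ℕ) (hDpos : 0 < D) (hdisc : D % 4 = 0 ∨ D % 4 = 1)
    (hnsq : ¬ IsSquare D) (hd : IsFundamentalDiscriminant d) (hℓ : 0 < ℓ)
    (hfac : D = d * (ℓ : ℤ) ^ 2) (L1d : ℝ)
    (hL : Filter.Tendsto (fun N => ∑ n ∈ Finset.range N, (kron d (n + 1) : ℝ) / (n + 1))
      Filter.atTop (nhds L1d)) :
    Filter.Tendsto
      (fun N => ∑ n ∈ Finset.range N,
        (kron d ((n + 1) / Nat.gcd (n + 1) ℓ) : ℝ) / (n + 1))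
      Filter.atTop
      (nhds (L1d * (1 / (ℓ : ℝ)) *
        ∏ p ∈ ℓ.primeFactors,
          (1 + ((p : ℝ) - (kron d p : ℝ)) *
            ((p : ℝ) ^ (ℓ.factorization p) - 1) / ((p : ℝ) - 1)))) :=
  stmt1_general d ℓ hℓ L1d hL
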